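/- Let u : ℝ × ℝⁿ → ℝⁿ be smooth and suppose there exist continuously differentiable functions g, h, S : ℝ × ℝⁿ → ℝ, with S twice continuously differentiable, such that ∂ₜu + (u·∇)u = ∇g + h∇S and ∂ₜS + ⟨u, ∇S⟩ = 0 everywhere. Let x : ℝ → ℝⁿ be a streamline, x′(t) = u(t, x(t)), and let v₁, v₂, v₃ : ℝ → ℝⁿ satisfy vᵢ′(t) = D_x u(t, x(t)) vᵢ(t) for i = 1,2,3. Then the function t ↦ ⟨∇S(t,x(t)), v₁(t)⟩ ω(t,x(t))(v₂(t), v₃(t)) − ⟨∇S(t,x(t)), v₂(t)⟩ ω(t,x(t))(v₁(t), v₃(t)) + ⟨∇S(t,x(t)), v₃(t)⟩ ω(t,x(t))(v₁(t), v₂(t)) is constant. -/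

import Mathlib

open scoped RealInnerProductSpace

/-- The vorticity 2-form `ω(t,x)(v,w) = ⟨D_x u v, w⟩ − ⟨D_x u w, v⟩` of a
time-dependent velocity field. -/
noncomputable def vorticity2Form {n : ℕ}
    (u : ℝ × EuclideanSpace ℝ (Fin n) → EuclideanSpace ℝ (Fin n))
    (t : ℝ) (x v w : EuclideanSpace ℝ (Fin n)) : ℝ :=
  ⟪fderiv ℝ (fun y => u (t, y)) x v, w⟫ - ⟪fderiv ℝ (fun y => u (t, y)) x w, v⟫

open ContinuousLinearMap in
section
variable {n : ℕ}
local notation "E" => EuclideanSpace ℝ (Fin n)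

lemma spatial_hasFDerivAt {F : Type*} [NormedAddCommGroup F] [NormedSpace ℝ F]
    (f : ℝ × E → F) (t : ℝ) (y : E)
    (hf : DifferentiableAt ℝ f (t, y)) :
    HasFDerivAt (fun z => f (t, z))
      ((fderiv ℝ f (t, y)).comp (inr ℝ ℝ (EuclideanSpace ℝ (Fin n)))) y :=
  hf.hasFDerivAt.comp y (hasFDerivAt_prodMk_right t y)

lemma spatial_fderiv_apply {F : Type*} [NormedAddCommGroup F] [NormedSpace ℝ F]
    (f : ℝ × E → F) (t : ℝ) (y : E)
    (hf : DifferentiableAt ℝ f (t, y)) (v : E) :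
    fderiv ℝ (fun z => f (t, z)) y v = fderiv ℝ f (t, y) (0, v) := by
  rw [(spatial_hasFDerivAt f t y hf).fderiv]; rfl

lemma time_deriv {F : Type*} [NormedAddCommGroup F] [NormedSpace ℝ F]
    (f : ℝ × E → F) (t : ℝ) (y : E)
    (hf : DifferentiableAt ℝ f (t, y)) :
    deriv (fun τ => f (τ, y)) t = fderiv ℝ f (t, y) (1, 0) := by
  have h1 : HasDerivAt (fun τ : ℝ => (τ, y)) ((1 : ℝ), (0 : EuclideanSpace ℝ (Fin n))) t :=
    (hasDerivAt_id t).prodMk (hasDerivAt_const t y)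
  exact (hf.hasFDerivAt.comp_hasDerivAt t h1).deriv

lemma inner_gradient_eq (f : E → ℝ) (y v : E) :
    ⟪gradient f y, v⟫ = fderiv ℝ f y v := by
  rw [gradient, InnerProductSpace.toDual_symm_apply]

lemma split_one (q : ℝ × E) (u : ℝ × E → E) (L : ℝ × E →L[ℝ] ℝ) :
    L (1, u q) = L (1, 0) + L (0, u q) := by
  rw [← map_add]; norm_num

lemma split_one' {F : Type*} [NormedAddCommGroup F] [NormedSpace ℝ F]
    (q : ℝ × E) (u : ℝ × E → E) (L : ℝ × E →L[ℝ] F) :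
    L (1, u q) = L (1, 0) + L (0, u q) := by
  rw [← map_add]; norm_num

lemma entropyFull (u : ℝ × E → E) (S : ℝ × E → ℝ) (hS : ContDiff ℝ 2 S)
    (entropy : ∀ (t : ℝ) (x : E), deriv (fun τ => S (τ, x)) t
      + ⟪u (t, x), gradient (fun y => S (t, y)) x⟫ = 0) :
    ∀ q : ℝ × E, fderiv ℝ S q (1, u q) = 0 := by
  rintro ⟨t, y⟩
  have hSd : Differentiable ℝ S := hS.differentiable (by norm_num)
  have h1 := entropy t y
  rw [time_deriv S t y (hSd _), real_inner_comm, inner_gradient_eq,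
      spatial_fderiv_apply S t y (hSd _)] at h1
  rw [split_one (t, y) u]; exact h1

lemma eulerFull (u : ℝ × E → E) (hu : ContDiff ℝ (⊤ : ℕ∞) u)
    (g h S : ℝ × E → ℝ) (hg : ContDiff ℝ 1 g) (hS : ContDiff ℝ 2 S)
    (euler : ∀ (t : ℝ) (x : E),
      deriv (fun τ => u (τ, x)) t + fderiv ℝ (fun y => u (t, y)) x (u (t, x))
        = gradient (fun y => g (t, y)) x + h (t, x) • gradient (fun y => S (t, y)) x) :
    ∀ (q : ℝ × E) (w : E), ⟪fderiv ℝ u q (1, u q), w⟫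
      = fderiv ℝ g q (0, w) + h q * fderiv ℝ S q (0, w) := by
  rintro ⟨t, y⟩ w
  have hud : Differentiable ℝ u := hu.differentiable (by simp)
  have hgd : Differentiable ℝ g := hg.differentiable one_ne_zero
  have hSd : Differentiable ℝ S := hS.differentiable (by norm_num)
  have h1 := euler t y
  rw [time_deriv u t y (hud _), spatial_fderiv_apply u t y (hud _)] at h1
  have h2 : fderiv ℝ u (t, y) (1, u (t, y))
      = gradient (fun z => g (t, z)) y + h (t, y) • gradient (fun z => S (t, z)) y := by
    rw [split_one' (t, y) u]; exact h1
  rw [h2, inner_add_left, real_inner_smul_left, inner_gradient_eq, inner_gradient_eq,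
      spatial_fderiv_apply g t y (hgd _), spatial_fderiv_apply S t y (hSd _)]

-- L1: entropy transport
lemma dS_transport (u : ℝ × E → E) (hu : ContDiff ℝ (⊤ : ℕ∞) u) (S : ℝ × E → ℝ) (hS : ContDiff ℝ 2 S)
    (hzero : ∀ q : ℝ × E, fderiv ℝ S q (1, u q) = 0)
    (x v : ℝ → E)
    (hx : ∀ t, HasDerivAt x (u (t, x t)) t)
    (hv : ∀ t, HasDerivAt v (fderiv ℝ (fun y => u (t, y)) (x t) (v t)) t) (t : ℝ) :
    HasDerivAt (fun t => fderiv ℝ S (t, x t) (0, v t)) 0 t := by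
  have hud : Differentiable ℝ u := hu.differentiable (by simp)
  have hSd : Differentiable ℝ S := hS.differentiable (by norm_num)
  have hDS : Differentiable ℝ (fderiv ℝ S) :=
    (hS.fderiv_right (m := 1) (by norm_num)).differentiable one_ne_zero
  set p : ℝ × E := (t, x t) with hpdef
  have hp : HasDerivAt (fun t => ((t : ℝ), x t)) (1, u (t, x t)) t :=
    (hasDerivAt_id t).prodMk (hx t)
  have hc : HasDerivAt (fun s => fderiv ℝ S (s, x s))
      (fderiv ℝ (fderiv ℝ S) p (1, u p)) t :=
    (hDS p).hasFDerivAt.comp_hasDerivAt t hp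
  have hv' : HasDerivAt v (fderiv ℝ u p (0, v t)) t := by
    have := hv t
    rwa [spatial_fderiv_apply u t (x t) (hud _)] at this
  have hm : HasDerivAt (fun s => (((0:ℝ), v s) : ℝ × E)) ((0:ℝ), fderiv ℝ u p (0, v t)) t :=
    (hasDerivAt_const t (0:ℝ)).prodMk hv'
  have key := hc.clm_apply hm
  -- derivative of the zero function q ↦ DS q (1, u q)
  have hB : HasFDerivAt (fun q : ℝ × E => (((1:ℝ), u q) : ℝ × E))
      ((0 : (ℝ × E) →L[ℝ] ℝ).prod (fderiv ℝ u p)) p :=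
    (hasFDerivAt_const (1:ℝ) p).prodMk (hud p).hasFDerivAt
  have hz := (hDS p).hasFDerivAt.clm_apply hB
  have hfun : (fun q : ℝ × E => fderiv ℝ S q (1, u q)) = fun _ => (0:ℝ) :=
    funext hzero
  rw [hfun] at hz
  have hM := hz.unique (hasFDerivAt_const 0 p)
  have hMapp : ((fderiv ℝ S p).comp ((0 : (ℝ × E) →L[ℝ] ℝ).prod (fderiv ℝ u p))
      + (fderiv ℝ (fderiv ℝ S) p).flip ((1:ℝ), u p)) ((0:ℝ), v t) = 0 := by
    rw [hM]; rfl
  simp only [add_apply, comp_apply, flip_apply, prod_apply, zero_apply] at hMapp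
  have hsymm : fderiv ℝ (fderiv ℝ S) p ((0:ℝ), v t) ((1:ℝ), u p)
      = fderiv ℝ (fderiv ℝ S) p ((1:ℝ), u p) ((0:ℝ), v t) :=
    second_derivative_symmetric (fun q => (hSd q).hasFDerivAt) (hDS p).hasFDerivAt _ _
  have : fderiv ℝ (fderiv ℝ S) p (1, u p) ((0:ℝ), v t)
      + fderiv ℝ S p ((0:ℝ), fderiv ℝ u p (0, v t)) = 0 := by
    rw [← hsymm]; linarith [hMapp]
  rw [this] at key
  exact key
set_option maxHeartbeats 2000000 in
lemma euler_antisym (u : ℝ × E → E) (hu : ContDiff ℝ (⊤ : ℕ∞) u)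
    (g h S : ℝ × E → ℝ) (hg : ContDiff ℝ 1 g) (hh : ContDiff ℝ 1 h) (hS : ContDiff ℝ 2 S)
    (hE : ∀ (q : ℝ × E) (w : E), ⟪fderiv ℝ u q (1, u q), w⟫
      = fderiv ℝ g q (0, w) + h q * fderiv ℝ S q (0, w))
    (t : ℝ) (X a b : E) :
    ⟪fderiv ℝ (fderiv ℝ u) (t,X) ((0:ℝ),a) (1, u (t,X))
        + fderiv ℝ u (t,X) (0, fderiv ℝ u (t,X) (0,a)), b⟫
      - ⟪fderiv ℝ (fderiv ℝ u) (t,X) ((0:ℝ),b) (1, u (t,X))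
        + fderiv ℝ u (t,X) (0, fderiv ℝ u (t,X) (0,b)), a⟫
    = fderiv ℝ h (t,X) ((0:ℝ),a) * fderiv ℝ S (t,X) ((0:ℝ),b)
      - fderiv ℝ h (t,X) ((0:ℝ),b) * fderiv ℝ S (t,X) ((0:ℝ),a) := by
  have hud : Differentiable ℝ u := hu.differentiable (by simp)
  have hDud : Differentiable ℝ (fderiv ℝ u) := (hu.fderiv_right (m := 1) (by exact WithTop.coe_le_coe.mpr le_top)).differentiable one_ne_zero
  have hgd : Differentiable ℝ g := hg.differentiable one_ne_zero
  have hhd : Differentiable ℝ h := hh.differentiable one_ne_zero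
  have hSd : Differentiable ℝ S := hS.differentiable (by norm_num)
  have hDS : Differentiable ℝ (fderiv ℝ S) :=
    (hS.fderiv_right (m := 1) (by norm_num)).differentiable one_ne_zero
  set p : ℝ × E := (t, X) with hpdef
  -- derivative of k q := Du q (1, u q)
  have hB : HasFDerivAt (fun q : ℝ × E => (((1:ℝ), u q) : ℝ × E))
      ((0 : (ℝ × E) →L[ℝ] ℝ).prod (fderiv ℝ u p)) p :=
    (hasFDerivAt_const (1:ℝ) p).prodMk (hud p).hasFDerivAt
  have hk := (hDud p).hasFDerivAt.clm_apply hB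
  set K : (ℝ × E) →L[ℝ] E :=
    (fderiv ℝ u p).comp ((0 : (ℝ × E) →L[ℝ] ℝ).prod (fderiv ℝ u p))
      + (fderiv ℝ (fderiv ℝ u) p).flip (1, u p) with hKdef
  -- Φ'_c
  have hPhi : ∀ c : E, HasFDerivAt (fun q => (innerSL ℝ c) (fderiv ℝ u q (1, u q)))
      ((innerSL ℝ c).comp K) p := by
    intro c
    exact ((innerSL ℝ c).hasFDerivAt).comp p hk
  -- R'_c
  have hDSc : ∀ c : E, HasFDerivAt (fun q => fderiv ℝ S q ((0:ℝ), c))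
      ((fderiv ℝ S p).comp (0 : (ℝ × E) →L[ℝ] (ℝ × E))
        + (fderiv ℝ (fderiv ℝ S) p).flip ((0:ℝ), c)) p := by
    intro c
    exact (hDS p).hasFDerivAt.clm_apply (hasFDerivAt_const ((0:ℝ), c) p)
  have hRho : ∀ c : E, HasFDerivAt (fun q => h q * fderiv ℝ S q ((0:ℝ), c))
      (h p • ((fderiv ℝ S p).comp (0 : (ℝ × E) →L[ℝ] (ℝ × E))
          + (fderiv ℝ (fderiv ℝ S) p).flip ((0:ℝ), c))
        + fderiv ℝ S p ((0:ℝ), c) • fderiv ℝ h p) p := by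
    intro c
    exact (hhd p).hasFDerivAt.mul (hDSc c)
  -- γ_c : q ↦ Dg q (0, c)
  have hGamma : ∀ c : E, HasFDerivAt (fun q => fderiv ℝ g q ((0:ℝ), c))
      (((innerSL ℝ c).comp K)
        - (h p • ((fderiv ℝ S p).comp (0 : (ℝ × E) →L[ℝ] (ℝ × E))
            + (fderiv ℝ (fderiv ℝ S) p).flip ((0:ℝ), c))
          + fderiv ℝ S p ((0:ℝ), c) • fderiv ℝ h p)) p := by
    intro c
    have h1 := (hPhi c).sub (hRho c)
    have h2 : (fun q => (innerSL ℝ c) (fderiv ℝ u q (1, u q)) - h q * fderiv ℝ S q ((0:ℝ), c))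
        = fun q => fderiv ℝ g q ((0:ℝ), c) := by
      funext q
      rw [innerSL_apply_apply, real_inner_comm, hE q c]; ring
    rw [← h2]; exact h1
  -- restriction to the slice
  have hPsi : ∀ c : E, HasFDerivAt (fun y => fderiv ℝ g (t, y) ((0:ℝ), c))
      ((((innerSL ℝ c).comp K)
        - (h p • ((fderiv ℝ S p).comp (0 : (ℝ × E) →L[ℝ] (ℝ × E))
            + (fderiv ℝ (fderiv ℝ S) p).flip ((0:ℝ), c))
          + fderiv ℝ S p ((0:ℝ), c) • fderiv ℝ h p)).comp
        (inr ℝ ℝ (EuclideanSpace ℝ (Fin n)))) X := by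
    intro c
    exact (hGamma c).comp X (hasFDerivAt_prodMk_right t X)
  -- the C¹ gradient field of g(t,·), in differentiable closed form
  set G : EuclideanSpace ℝ (Fin n) → EuclideanSpace ℝ (Fin n) →L[ℝ] ℝ :=
    fun y => (innerSL ℝ) (fderiv ℝ u (t, y) (1, u (t, y)))
      - h (t, y) • ((fderiv ℝ S (t, y)).comp (inr ℝ ℝ (EuclideanSpace ℝ (Fin n)))) with hGdef
  have hGval : ∀ (y : E) (c : E), G y c = fderiv ℝ g (t, y) ((0:ℝ), c) := by
    intro y c
    simp only [hGdef, sub_apply, smul_apply, innerSL_apply_apply, comp_apply, inr_apply,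
      smul_eq_mul]
    rw [hE (t, y) c]; ring
  have hmk : DifferentiableAt ℝ (fun y : E => ((t, y) : ℝ × E)) X :=
    (hasFDerivAt_prodMk_right t X).differentiableAt
  have hGdiff : DifferentiableAt ℝ G X := by
    apply DifferentiableAt.sub
    · exact (innerSL ℝ).differentiable.differentiableAt.comp X
        (DifferentiableAt.clm_apply ((hDud (t, X)).comp X hmk)
          ((differentiableAt_const (1:ℝ)).prodMk ((hud (t, X)).comp X hmk)))
    · exact ((hhd (t, X)).comp X hmk).smul
        (DifferentiableAt.clm_comp ((hDS (t, X)).comp X hmk)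
          (differentiableAt_const (inr ℝ ℝ (EuclideanSpace ℝ (Fin n)))))
  have hG' : ∀ y : E, HasFDerivAt (fun z => g (t, z)) (G y) y := by
    intro y
    have h1 := spatial_hasFDerivAt g t y (hgd _)
    refine h1.congr_fderiv ?_
    refine ContinuousLinearMap.ext fun (c : E) => ?_
    rw [hGval y c]; rfl
  have hsym : ∀ c d : E, fderiv ℝ G X c d = fderiv ℝ G X d c :=
    second_derivative_symmetric hG' hGdiff.hasFDerivAt
  -- identify the derivative of ψ_c with second-derivative entries
  have keyc : ∀ c d : E,
      ((((innerSL ℝ c).comp K)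
        - (h p • ((fderiv ℝ S p).comp (0 : (ℝ × E) →L[ℝ] (ℝ × E))
            + (fderiv ℝ (fderiv ℝ S) p).flip ((0:ℝ), c))
          + fderiv ℝ S p ((0:ℝ), c) • fderiv ℝ h p)).comp
        (inr ℝ ℝ (EuclideanSpace ℝ (Fin n)))) d
      = fderiv ℝ G X d c := by
    intro c d
    have h1 := hGdiff.hasFDerivAt.clm_apply (hasFDerivAt_const c X)
    have h2 : (fun y => G y c) = fun y => fderiv ℝ g (t, y) ((0:ℝ), c) :=
      funext fun y => hGval y c
    rw [h2] at h1
    have h3 := (hPsi c).unique h1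
    have h4 := congrArg (fun (L : EuclideanSpace ℝ (Fin n) →L[ℝ] ℝ) => L d) h3
    simpa using h4
  -- D2S symmetry
  have hS2sym : fderiv ℝ (fderiv ℝ S) p ((0:ℝ), a) ((0:ℝ), b)
      = fderiv ℝ (fderiv ℝ S) p ((0:ℝ), b) ((0:ℝ), a) :=
    second_derivative_symmetric (fun q => (hSd q).hasFDerivAt) (hDS p).hasFDerivAt _ _
  -- combine
  have e1 := keyc b a
  have e2 := keyc a b
  rw [hsym b a] at e2
  have e3 := e1.trans e2.symm
  simp only [hKdef, comp_apply, sub_apply, add_apply, smul_apply, flip_apply,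
    prod_apply, zero_apply, coe_zero', Pi.zero_apply, map_zero, smul_eq_mul,
    innerSL_apply_apply, inr_apply, inner_add_right] at e3
  have g1 : ⟪fderiv ℝ (fderiv ℝ u) p ((0:ℝ), a) (1, u p)
      + fderiv ℝ u p (0, fderiv ℝ u p (0, a)), b⟫
      = ⟪b, fderiv ℝ u p (0, fderiv ℝ u p (0, a))⟫
        + ⟪b, fderiv ℝ (fderiv ℝ u) p ((0:ℝ), a) (1, u p)⟫ := by
    rw [inner_add_left, real_inner_comm b, real_inner_comm b]; ring
  have g2 : ⟪fderiv ℝ (fderiv ℝ u) p ((0:ℝ), b) (1, u p)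
      + fderiv ℝ u p (0, fderiv ℝ u p (0, b)), a⟫
      = ⟪a, fderiv ℝ u p (0, fderiv ℝ u p (0, b))⟫
        + ⟪a, fderiv ℝ (fderiv ℝ u) p ((0:ℝ), b) (1, u p)⟫ := by
    rw [inner_add_left, real_inner_comm a, real_inner_comm a]; ring
  rw [g1, g2]
  rw [hS2sym] at e3
  linarith [e3]
set_option maxHeartbeats 1000000 in
lemma omega_transport (u : ℝ × E → E) (hu : ContDiff ℝ (⊤ : ℕ∞) u)
    (g h S : ℝ × E → ℝ) (hg : ContDiff ℝ 1 g) (hh : ContDiff ℝ 1 h) (hS : ContDiff ℝ 2 S)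
    (hE : ∀ (q : ℝ × E) (w : E), ⟪fderiv ℝ u q (1, u q), w⟫
      = fderiv ℝ g q (0, w) + h q * fderiv ℝ S q (0, w))
    (x v w : ℝ → E)
    (hx : ∀ t, HasDerivAt x (u (t, x t)) t)
    (hv : ∀ t, HasDerivAt v (fderiv ℝ (fun y => u (t, y)) (x t) (v t)) t)
    (hw : ∀ t, HasDerivAt w (fderiv ℝ (fun y => u (t, y)) (x t) (w t)) t)
    (t : ℝ) :
    HasDerivAt (fun s => ⟪fderiv ℝ u (s, x s) ((0:ℝ), v s), w s⟫
        - ⟪fderiv ℝ u (s, x s) ((0:ℝ), w s), v s⟫)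
      (fderiv ℝ h (t, x t) ((0:ℝ), v t) * fderiv ℝ S (t, x t) ((0:ℝ), w t)
        - fderiv ℝ h (t, x t) ((0:ℝ), w t) * fderiv ℝ S (t, x t) ((0:ℝ), v t)) t := by
  have hud : Differentiable ℝ u := hu.differentiable (by simp)
  have hDud : Differentiable ℝ (fderiv ℝ u) := (hu.fderiv_right (m := 1) (by exact WithTop.coe_le_coe.mpr le_top)).differentiable one_ne_zero
  set p : ℝ × E := (t, x t) with hpdef
  have hp : HasDerivAt (fun s => ((s : ℝ), x s)) (1, u p) t :=
    (hasDerivAt_id t).prodMk (hx t)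
  have hc : HasDerivAt (fun s => fderiv ℝ u (s, x s))
      (fderiv ℝ (fderiv ℝ u) p (1, u p)) t :=
    (hDud p).hasFDerivAt.comp_hasDerivAt t hp
  have hv' : HasDerivAt v (fderiv ℝ u p (0, v t)) t := by
    have := hv t; rwa [spatial_fderiv_apply u t (x t) (hud _)] at this
  have hw' : HasDerivAt w (fderiv ℝ u p (0, w t)) t := by
    have := hw t; rwa [spatial_fderiv_apply u t (x t) (hud _)] at this
  have hmv : HasDerivAt (fun s => (((0:ℝ), v s) : ℝ × E)) ((0:ℝ), fderiv ℝ u p (0, v t)) t :=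
    (hasDerivAt_const t (0:ℝ)).prodMk hv'
  have hmw : HasDerivAt (fun s => (((0:ℝ), w s) : ℝ × E)) ((0:ℝ), fderiv ℝ u p (0, w t)) t :=
    (hasDerivAt_const t (0:ℝ)).prodMk hw'
  have h1 := (hc.clm_apply hmv).inner ℝ hw'
  have h2 := (hc.clm_apply hmw).inner ℝ hv'
  have h3 := h1.sub h2
  refine HasDerivAt.congr_deriv h3 ?_
  have hu2sym : ∀ c : E, fderiv ℝ (fderiv ℝ u) p (1, u p) ((0:ℝ), c)
      = fderiv ℝ (fderiv ℝ u) p ((0:ℝ), c) (1, u p) := fun c =>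
    second_derivative_symmetric (fun q => (hud q).hasFDerivAt) (hDud p).hasFDerivAt _ _
  have hA := euler_antisym u hu g h S hg hh hS hE t (x t) (v t) (w t)
  rw [← hpdef] at hA
  simp only [inner_add_left] at hA ⊢
  rw [hu2sym (v t), hu2sym (w t), real_inner_comm (fderiv ℝ u p (0, w t)) (fderiv ℝ u p (0, v t))]
  linarith [hA]
end

set_option maxHeartbeats 1000000 in
/-- Transport law `D̄ₜ(dS ∧ ω) = 0` for non-isentropic flow: the 3-form `dS ∧ ω`
is invariant when evaluated on three vectors advected along a streamline. -/
theorem dS_wedge_omega_invariant (n : ℕ)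
    (u : ℝ × EuclideanSpace ℝ (Fin n) → EuclideanSpace ℝ (Fin n))
    (hu : ContDiff ℝ (⊤ : ℕ∞) u)
    (g h S : ℝ × EuclideanSpace ℝ (Fin n) → ℝ)
    (hg : ContDiff ℝ 1 g) (hh : ContDiff ℝ 1 h) (hS : ContDiff ℝ 2 S)
    (euler : ∀ (t : ℝ) (x : EuclideanSpace ℝ (Fin n)),
      deriv (fun τ => u (τ, x)) t + fderiv ℝ (fun y => u (t, y)) x (u (t, x))
        = gradient (fun y => g (t, y)) x + h (t, x) • gradient (fun y => S (t, y)) x)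
    (entropy : ∀ (t : ℝ) (x : EuclideanSpace ℝ (Fin n)),
      deriv (fun τ => S (τ, x)) t + ⟪u (t, x), gradient (fun y => S (t, y)) x⟫ = 0)
    (x : ℝ → EuclideanSpace ℝ (Fin n))
    (hx : ∀ t, HasDerivAt x (u (t, x t)) t)
    (v₁ v₂ v₃ : ℝ → EuclideanSpace ℝ (Fin n))
    (hv₁ : ∀ t, HasDerivAt v₁ (fderiv ℝ (fun y => u (t, y)) (x t) (v₁ t)) t)
    (hv₂ : ∀ t, HasDerivAt v₂ (fderiv ℝ (fun y => u (t, y)) (x t) (v₂ t)) t)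
    (hv₃ : ∀ t, HasDerivAt v₃ (fderiv ℝ (fun y => u (t, y)) (x t) (v₃ t)) t) :
    ∀ t₁ t₂ : ℝ,
      (⟪gradient (fun y => S (t₁, y)) (x t₁), v₁ t₁⟫ *
          vorticity2Form u t₁ (x t₁) (v₂ t₁) (v₃ t₁) -
        ⟪gradient (fun y => S (t₁, y)) (x t₁), v₂ t₁⟫ *
          vorticity2Form u t₁ (x t₁) (v₁ t₁) (v₃ t₁) +
        ⟪gradient (fun y => S (t₁, y)) (x t₁), v₃ t₁⟫ *
          vorticity2Form u t₁ (x t₁) (v₁ t₁) (v₂ t₁)) =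
      (⟪gradient (fun y => S (t₂, y)) (x t₂), v₁ t₂⟫ *
          vorticity2Form u t₂ (x t₂) (v₂ t₂) (v₃ t₂) -
        ⟪gradient (fun y => S (t₂, y)) (x t₂), v₂ t₂⟫ *
          vorticity2Form u t₂ (x t₂) (v₁ t₂) (v₃ t₂) +
        ⟪gradient (fun y => S (t₂, y)) (x t₂), v₃ t₂⟫ *
          vorticity2Form u t₂ (x t₂) (v₁ t₂) (v₂ t₂)) := by
  intro t₁ t₂
  have hud : Differentiable ℝ u := hu.differentiable (by simp)
  have hSd : Differentiable ℝ S := hS.differentiable (by norm_num)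
  have hzero := entropyFull u S hS entropy
  have hE := eulerFull u hu g h S hg hS euler
  -- the transported quantity, in full-fderiv form
  set Ψ : ℝ → ℝ := fun t =>
    fderiv ℝ S (t, x t) ((0:ℝ), v₁ t) *
        (⟪fderiv ℝ u (t, x t) ((0:ℝ), v₂ t), v₃ t⟫
          - ⟪fderiv ℝ u (t, x t) ((0:ℝ), v₃ t), v₂ t⟫) -
      fderiv ℝ S (t, x t) ((0:ℝ), v₂ t) *
        (⟪fderiv ℝ u (t, x t) ((0:ℝ), v₁ t), v₃ t⟫
          - ⟪fderiv ℝ u (t, x t) ((0:ℝ), v₃ t), v₁ t⟫) +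
      fderiv ℝ S (t, x t) ((0:ℝ), v₃ t) *
        (⟪fderiv ℝ u (t, x t) ((0:ℝ), v₁ t), v₂ t⟫
          - ⟪fderiv ℝ u (t, x t) ((0:ℝ), v₂ t), v₁ t⟫) with hΨdef
  have hrw : ∀ t : ℝ,
      (⟪gradient (fun y => S (t, y)) (x t), v₁ t⟫ *
          vorticity2Form u t (x t) (v₂ t) (v₃ t) -
        ⟪gradient (fun y => S (t, y)) (x t), v₂ t⟫ *
          vorticity2Form u t (x t) (v₁ t) (v₃ t) +
        ⟪gradient (fun y => S (t, y)) (x t), v₃ t⟫ *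
          vorticity2Form u t (x t) (v₁ t) (v₂ t)) = Ψ t := by
    intro t
    have hgrad : ∀ c : EuclideanSpace ℝ (Fin n),
        ⟪gradient (fun y => S (t, y)) (x t), c⟫ = fderiv ℝ S (t, x t) ((0:ℝ), c) := by
      intro c
      rw [inner_gradient_eq, spatial_fderiv_apply S t (x t) (hSd _)]
    have hvort : ∀ c d : EuclideanSpace ℝ (Fin n),
        vorticity2Form u t (x t) c d
          = ⟪fderiv ℝ u (t, x t) ((0:ℝ), c), d⟫ - ⟪fderiv ℝ u (t, x t) ((0:ℝ), d), c⟫ := by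
      intro c d
      unfold vorticity2Form
      rw [spatial_fderiv_apply u t (x t) (hud _), spatial_fderiv_apply u t (x t) (hud _)]
    rw [hgrad, hgrad, hgrad, hvort, hvort, hvort, hΨdef]
  rw [hrw t₁, hrw t₂]
  have hΨ' : ∀ t : ℝ, HasDerivAt Ψ 0 t := by
    intro t
    have c₁ := dS_transport u hu S hS hzero x v₁ hx hv₁ t
    have c₂ := dS_transport u hu S hS hzero x v₂ hx hv₂ t
    have c₃ := dS_transport u hu S hS hzero x v₃ hx hv₃ t
    have w₂₃ := omega_transport u hu g h S hg hh hS hE x v₂ v₃ hx hv₂ hv₃ t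
    have w₁₃ := omega_transport u hu g h S hg hh hS hE x v₁ v₃ hx hv₁ hv₃ t
    have w₁₂ := omega_transport u hu g h S hg hh hS hE x v₁ v₂ hx hv₁ hv₂ t
    have htot := ((c₁.mul w₂₃).sub (c₂.mul w₁₃)).add (c₃.mul w₁₂)
    refine HasDerivAt.congr_deriv htot ?_
    ring
  exact is_const_of_deriv_eq_zero (fun t => (hΨ' t).differentiableAt)
    (fun t => (hΨ' t).deriv) t₁ t₂
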